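/- Let n ≥ 2 and take the ideal observables A^{(j)}_x. Fix s, s' ∈ {0,1}^n and define the 2^n × 2^n unitary U_{s→s'} = U^{(1)} ⊗ ⋯ ⊗ U^{(n)}, where U^{(1)} = I_2 if s_1 = s'_1 and U^{(1)} = σ_Z otherwise, and for j ∈ {2,…,n}, U^{(j)} = I_2 if s_j = s'_j and U^{(j)} = σ_X otherwise. Then |ξ_{s'}⟩ = U_{s→s'} |ξ_s⟩ and W_{s'} = U_{s→s'} W_s U_{s→s'}†. -/
import Mathlib


open Matrix Finset ComplexOrder

noncomputable section

/-- 2×2 complex matrices. -/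
abbrev Mat2 := Matrix (Fin 2) (Fin 2) ℂ

/-- The Pauli matrix `σ_X`. -/
def σX : Mat2 := !![0, 1; 1, 0]

/-- The Pauli matrix `σ_Z`. -/
def σZ : Mat2 := !![1, 0; 0, -1]

/-- Tensor product of `n` 2×2 matrices, indexed by bit strings `Fin n → Fin 2`. -/
def tensorN (n : ℕ) (M : Fin n → Mat2) :
    Matrix (Fin n → Fin 2) (Fin n → Fin 2) ℂ :=
  Matrix.of fun f g => ∏ j, M j (f j) (g j)

/-- The operator `W_s` built from the observables `A^{(j)}_x`. -/
def Wop (n : ℕ) [NeZero n] (A : Fin n → Fin 2 → Mat2) (s : Fin n → Fin 2) :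
    Matrix (Fin n → Fin 2) (Fin n → Fin 2) ℂ :=
  (((n : ℂ) - 1) * (-1 : ℂ) ^ ((s 0 : ℕ))) •
      tensorN n (fun j => if j = 0 then A 0 0 + A 0 1 else A j 0)
    + ∑ j ∈ Finset.univ.filter (fun j : Fin n => j ≠ 0),
        ((-1 : ℂ) ^ ((s j : ℕ))) •
          tensorN n (fun k => if k = 0 then A 0 0 - A 0 1
            else if k = j then A j 1 else 1)

/-- The ideal observables. -/
def Aideal (n : ℕ) [NeZero n] : Fin n → Fin 2 → Mat2 :=
  fun j x =>
    if j = 0 then ((Real.sqrt 2 : ℂ))⁻¹ • (σX + ((-1 : ℂ) ^ ((x : ℕ))) • σZ)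
    else if x = 0 then σX else σZ

/-- The GHZ-basis vector `|ξ_s⟩`. -/
def ghz (n : ℕ) [NeZero n] (s : Fin n → Fin 2) : (Fin n → Fin 2) → ℂ :=
  fun f => ((Real.sqrt 2 : ℂ))⁻¹ *
    ((if f = (fun j => if j = 0 then 0 else s j) then 1 else 0)
      + (-1 : ℂ) ^ ((s 0 : ℕ)) *
        (if f = (fun j => if j = 0 then 1 else 1 - s j) then 1 else 0))

/-- The local relabeling unitary `U_{s→s'}`. -/
def Urelabel (n : ℕ) [NeZero n] (s s' : Fin n → Fin 2) :
    Matrix (Fin n → Fin 2) (Fin n → Fin 2) ℂ :=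
  tensorN n (fun j =>
    if j = 0 then (if s 0 = s' 0 then 1 else σZ)
    else (if s j = s' j then 1 else σX))

-- ===================== AUXILIARY LEMMAS =====================

lemma tensorN_mul (n : ℕ) (M N : Fin n → Mat2) :
    tensorN n M * tensorN n N = tensorN n (fun j => M j * N j) := by
  ext f g
  simp only [tensorN, Matrix.of_apply, Matrix.mul_apply, ← Finset.prod_mul_distrib]
  rw [Finset.prod_univ_sum]
  simp [Fintype.piFinset_univ]

lemma tensorN_conjT (n : ℕ) (M : Fin n → Mat2) :
    (tensorN n M)ᴴ = tensorN n (fun j => (M j)ᴴ) := by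
  ext f g
  simp [tensorN, Matrix.conjTranspose_apply, star_prod]

lemma tensorN_smul (n : ℕ) (c : Fin n → ℂ) (M : Fin n → Mat2) :
    tensorN n (fun j => c j • M j) = (∏ j, c j) • tensorN n M := by
  ext f g
  simp [tensorN, Matrix.smul_apply, smul_eq_mul, Finset.prod_mul_distrib]

lemma conj_tensor (n : ℕ) (u F : Fin n → Mat2) (c : Fin n → ℂ)
    (h : ∀ j, u j * F j * (u j)ᴴ = c j • F j) :
    tensorN n u * tensorN n F * (tensorN n u)ᴴ = (∏ j, c j) • tensorN n F := by
  have h' : (fun j => u j * F j * (u j)ᴴ) = fun j => c j • F j := funext h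
  simp only [tensorN_conjT, tensorN_mul, h', tensorN_smul]

lemma σX_conjT : σXᴴ = σX := by
  ext i j; fin_cases i <;> fin_cases j <;> simp [σX]
lemma σZ_conjT : σZᴴ = σZ := by
  ext i j; fin_cases i <;> fin_cases j <;> simp [σZ]
lemma σX_mul_σX : σX * σX = 1 := by
  ext i j; fin_cases i <;> fin_cases j <;>
    simp [σX, Matrix.mul_apply, Fin.sum_univ_two, Matrix.one_apply]
lemma σZ_mul_σZ : σZ * σZ = 1 := by
  ext i j; fin_cases i <;> fin_cases j <;>
    simp [σZ, Matrix.mul_apply, Fin.sum_univ_two, Matrix.one_apply]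
lemma σZ_σX_σZ : σZ * σX * σZ = -σX := by
  ext i j; fin_cases i <;> fin_cases j <;>
    simp [σX, σZ, Matrix.mul_apply, Fin.sum_univ_two]
lemma σX_σZ_σX : σX * σZ * σX = -σZ := by
  ext i j; fin_cases i <;> fin_cases j <;>
    simp [σX, σZ, Matrix.mul_apply, Fin.sum_univ_two]
lemma fin2 (a : Fin 2) : a = 0 ∨ a = 1 := by fin_cases a <;> simp
lemma sign_lemma (a b : Fin 2) :
    ((-1:ℂ))^((b:ℕ)) = (if a = b then (1:ℂ) else -1) * (-1)^((a:ℕ)) := by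
  fin_cases a <;> fin_cases b <;> norm_num
lemma σX_apply (a b : Fin 2) : σX a b = if a = b then 0 else 1 := by
  fin_cases a <;> fin_cases b <;> simp [σX]
lemma σZ_apply (a b : Fin 2) : σZ a b = if a = b then (if a = 0 then 1 else -1) else 0 := by
  fin_cases a <;> fin_cases b <;> simp [σZ]

lemma A_sum (n : ℕ) [NeZero n] :
    Aideal n 0 0 + Aideal n 0 1 = (2 * ((Real.sqrt 2:ℂ))⁻¹) • σX := by
  simp only [Aideal, if_pos rfl]; norm_num; module
lemma A_diff (n : ℕ) [NeZero n] :
    Aideal n 0 0 - Aideal n 0 1 = (2 * ((Real.sqrt 2:ℂ))⁻¹) • σZ := by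
  simp only [Aideal, if_pos rfl]; norm_num; module
lemma L1 (n : ℕ) [NeZero n] :
    σZ * (Aideal n 0 0 + Aideal n 0 1) * σZᴴ = (-1 : ℂ) • (Aideal n 0 0 + Aideal n 0 1) := by
  rw [σZ_conjT, A_sum, mul_smul_comm, smul_mul_assoc, σZ_σX_σZ]; simp
lemma L2 (n : ℕ) [NeZero n] :
    σZ * (Aideal n 0 0 - Aideal n 0 1) * σZᴴ = Aideal n 0 0 - Aideal n 0 1 := by
  rw [σZ_conjT, A_diff, mul_smul_comm, smul_mul_assoc]
  rw [show σZ * σZ * σZ = σZ by rw [σZ_mul_σZ, one_mul]]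
lemma L3 : σX * σZ * σXᴴ = (-1:ℂ) • σZ := by
  rw [σX_conjT, σX_σZ_σX]; simp
lemma L4 : σX * σX * σXᴴ = σX := by
  rw [σX_conjT, σX_mul_σX, one_mul]

lemma Aideal_X (n : ℕ) [NeZero n] {j : Fin n} (hj : j ≠ 0) : Aideal n j 0 = σX := by
  simp [Aideal, hj]
lemma Aideal_Z (n : ℕ) [NeZero n] {j : Fin n} (hj : j ≠ 0) : Aideal n j 1 = σZ := by
  simp [Aideal, hj]

/-- the per-site factor of `Urelabel`. -/
def ufun (n : ℕ) [NeZero n] (s s' : Fin n → Fin 2) : Fin n → Mat2 :=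
  fun j => if j = 0 then (if s 0 = s' 0 then 1 else σZ)
    else (if s j = s' j then 1 else σX)

lemma ufun_mul_conjT (n : ℕ) [NeZero n] (s s' : Fin n → Fin 2) (j : Fin n) :
    ufun n s s' j * (ufun n s s' j)ᴴ = 1 := by
  unfold ufun
  by_cases hj : j = 0
  · rw [if_pos hj]
    by_cases h : s 0 = s' 0 <;> simp [h, σZ_conjT, σZ_mul_σZ]
  · rw [if_neg hj]
    by_cases h : s j = s' j <;> simp [h, σX_conjT, σX_mul_σX]

/-- the local unitary `U_{s→s'}` maps `|ξ_s⟩` to `|ξ_{s'}⟩` and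
conjugates `W_s` (for the ideal observables) into `W_{s'}`. -/
theorem stmt12 (n : ℕ) [NeZero n] (hn : 2 ≤ n) (s s' : Fin n → Fin 2) :
    ghz n s' = (Urelabel n s s').mulVec (ghz n s)
    ∧ Wop n (Aideal n) s'
        = Urelabel n s s' * Wop n (Aideal n) s * (Urelabel n s s')ᴴ := by
  have hUeq : Urelabel n s s' = tensorN n (ufun n s s') := rfl
  constructor
  · -- Part 1
    funext f
    have hfac0 : ∀ j : Fin n, ∀ b : Fin 2,
        ufun n s s' j b (if j = 0 then 0 else s j)
        = if b = (if j = 0 then 0 else s' j) then (1:ℂ) else 0 := by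
      intro j b
      by_cases hj : j = 0
      · subst hj
        rw [if_pos rfl, if_pos rfl]
        unfold ufun
        rw [if_pos rfl]
        by_cases h : s 0 = s' 0
        · simp [h, Matrix.one_apply]
        · rcases fin2 b with hb | hb <;> simp [h, hb, σZ_apply]
      · rw [if_neg hj, if_neg hj]
        unfold ufun
        rw [if_neg hj]
        by_cases h : s j = s' j
        · simp [h, Matrix.one_apply]
        · rcases fin2 (s j) with h1 | h1 <;> rcases fin2 (s' j) with h2 | h2 <;>
            rcases fin2 b with hb | hb <;> simp_all [σX_apply]
    have hfac1 : ∀ j : Fin n, ∀ b : Fin 2,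
        ufun n s s' j b (if j = 0 then 1 else 1 - s j)
        = (if j = 0 then (if s 0 = s' 0 then (1:ℂ) else -1) else 1) *
          (if b = (if j = 0 then 1 else 1 - s' j) then (1:ℂ) else 0) := by
      intro j b
      by_cases hj : j = 0
      · subst hj
        rw [if_pos rfl, if_pos rfl, if_pos rfl]
        unfold ufun
        rw [if_pos rfl]
        by_cases h : s 0 = s' 0
        · simp [h, Matrix.one_apply]
        · rcases fin2 b with hb | hb <;> simp [h, hb, σZ_apply]
      · rw [if_neg hj, if_neg hj, if_neg hj, one_mul]
        unfold ufun
        rw [if_neg hj]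
        by_cases h : s j = s' j
        · simp [h, Matrix.one_apply]
        · rcases fin2 (s j) with h1 | h1 <;> rcases fin2 (s' j) with h2 | h2 <;>
            rcases fin2 b with hb | hb <;> simp_all [σX_apply]
    have hT0 : tensorN n (ufun n s s') f (fun j => if j = 0 then 0 else s j)
        = if f = (fun j => if j = 0 then 0 else s' j) then (1:ℂ) else 0 := by
      simp only [tensorN, Matrix.of_apply]
      calc (∏ j, ufun n s s' j (f j) (if j = 0 then 0 else s j))
          = ∏ j, if f j = (if j = 0 then 0 else s' j) then (1:ℂ) else 0 :=
            Finset.prod_congr rfl fun j _ => hfac0 j (f j)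
        _ = _ := by rw [Finset.prod_boole]; simp [funext_iff]
    have hT1 : tensorN n (ufun n s s') f (fun j => if j = 0 then 1 else 1 - s j)
        = (if s 0 = s' 0 then (1:ℂ) else -1) *
          if f = (fun j => if j = 0 then 1 else 1 - s' j) then (1:ℂ) else 0 := by
      simp only [tensorN, Matrix.of_apply]
      calc (∏ j, ufun n s s' j (f j) (if j = 0 then 1 else 1 - s j))
          = ∏ j, (if j = 0 then (if s 0 = s' 0 then (1:ℂ) else -1) else 1) *
              (if f j = (if j = 0 then 1 else 1 - s' j) then (1:ℂ) else 0) :=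
            Finset.prod_congr rfl fun j _ => hfac1 j (f j)
        _ = (∏ j, if j = 0 then (if s 0 = s' 0 then (1:ℂ) else -1) else 1) *
              ∏ j, (if f j = (if j = 0 then 1 else 1 - s' j) then (1:ℂ) else 0) :=
            Finset.prod_mul_distrib
        _ = _ := by
            rw [Finset.prod_ite_eq' Finset.univ (0 : Fin n)
              (fun _ => if s 0 = s' 0 then (1:ℂ) else -1), Finset.prod_boole]
            simp [funext_iff]
    have hv : ∀ g, ghz n s g
        = ((Real.sqrt 2:ℂ))⁻¹ * (if g = (fun j => if j = 0 then 0 else s j) then 1 else 0)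
          + (((Real.sqrt 2:ℂ))⁻¹ * (-1:ℂ)^((s 0:ℕ))) *
            (if g = (fun j => if j = 0 then 1 else 1 - s j) then 1 else 0) := by
      intro g; rw [ghz]; ring
    have hmv : (Urelabel n s s').mulVec (ghz n s) f
        = ∑ g, tensorN n (ufun n s s') f g * ghz n s g := rfl
    rw [hmv]
    simp only [hv, mul_add, mul_ite, mul_one, mul_zero, Finset.sum_add_distrib,
      Finset.sum_ite_eq', Finset.mem_univ, if_true]
    rw [hT0, hT1, ghz]
    rw [sign_lemma (s 0) (s' 0)]
    ring
  · -- Part 2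
    rw [hUeq, Wop, Wop, Matrix.mul_add, Matrix.add_mul]
    congr 1
    · rw [Matrix.mul_smul, Matrix.smul_mul]
      rw [conj_tensor n (ufun n s s')
        (fun j => if j = 0 then Aideal n 0 0 + Aideal n 0 1 else Aideal n j 0)
        (fun j => if j = 0 then (if s 0 = s' 0 then (1:ℂ) else -1) else 1) ?_]
      · rw [smul_smul, Finset.prod_ite_eq' Finset.univ (0 : Fin n)
          (fun _ => if s 0 = s' 0 then (1:ℂ) else -1)]
        simp only [Finset.mem_univ, if_true]
        congr 1
        rw [sign_lemma (s 0) (s' 0)]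
        ring
      · intro j
        beta_reduce
        by_cases hj : j = 0
        · subst hj
          simp only [↓reduceIte]
          unfold ufun
          simp only [↓reduceIte]
          by_cases h : s 0 = s' 0
          · simp [h]
          · simp only [h, if_false]
            exact L1 n
        · simp only [hj, if_false]
          rw [one_smul, Aideal_X n hj]
          unfold ufun
          simp only [hj, if_false]
          by_cases h : s j = s' j
          · simp [h]
          · simp only [h, if_false]
            exact L4
    · rw [Finset.mul_sum, Finset.sum_mul]
      refine Finset.sum_congr rfl fun j hj => ?_
      have hj0 : j ≠ 0 := by simpa using hj
      rw [Matrix.mul_smul, Matrix.smul_mul]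
      rw [conj_tensor n (ufun n s s')
        (fun k => if k = 0 then Aideal n 0 0 - Aideal n 0 1
          else if k = j then Aideal n j 1 else 1)
        (fun k => if k = j then (if s j = s' j then (1:ℂ) else -1) else 1) ?_]
      · rw [smul_smul, Finset.prod_ite_eq' Finset.univ j
          (fun _ => if s j = s' j then (1:ℂ) else -1)]
        simp only [Finset.mem_univ, if_true]
        congr 1
        rw [sign_lemma (s j) (s' j)]
        ring
      · intro k
        beta_reduce
        by_cases hk : k = 0
        · subst hk
          simp only [↓reduceIte, if_neg (Ne.symm hj0), one_smul]
          unfold ufun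
          simp only [↓reduceIte]
          by_cases h : s 0 = s' 0
          · simp [h]
          · simp only [h, if_false]
            exact L2 n
        · simp only [hk, if_false]
          by_cases hkj : k = j
          · subst hkj
            simp only [↓reduceIte]
            rw [Aideal_Z n hk]
            unfold ufun
            simp only [hk, if_false]
            by_cases h : s k = s' k
            · simp [h]
            · simp only [h, if_false]
              exact L3
          · simp only [hkj, if_false, one_smul, mul_one]
            exact ufun_mul_conjT n s s' k
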